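/- Let C be a finite candidate set with p ∈ C, let X and Y be finite multisets of 2-Approval votes on C, and let k, ℓ ∈ ℕ with k ≤ |X| and ℓ ≤ |Y|. If there exist submultisets X′ of X and Y′ of Y with |X′| = k and |Y′| = ℓ such that p is a 2-Approval winner of X′ + Y′, then there exist such submultisets X′ and Y′ that additionally satisfy #{votes in X′ containing p} = min(k, #{votes in X containing p}) and #{votes in Y′ containing p} = min(ℓ, #{votes in Y containing p}). -/

import Mathlib

/-!
Trading a vote of `X'` that does not contain `p` for an unused vote of `X` that does raises the
score of `p` by one and that of any other candidate by at most one, so `p` stays a winner.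
Repeating this until `X'` consists of votes containing `p` or exhausts those of `X` gives
`apScore X' p = min k (apScore X p)`; then the same is done for `Y'`.
-/

/-- The 2-Approval score of candidate `c`: the number of votes containing `c`. -/
def apScore {C : Type} [DecidableEq C] (V : Multiset (Sym2 C)) (c : C) : ℕ :=
  Multiset.card (V.filter (fun v => c ∈ v))

/-- `c` is a 2-Approval winner of `V` if its score is at least that of every candidate. -/
def apWinner {C : Type} [Fintype C] [DecidableEq C] (V : Multiset (Sym2 C)) (c : C) : Prop :=
  ∀ d : C, apScore V d ≤ apScore V c

section Score

variable {C : Type} [DecidableEq C]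

lemma apScore_add (A B : Multiset (Sym2 C)) (c : C) :
    apScore (A + B) c = apScore A c + apScore B c := by
  simp [apScore, Multiset.filter_add]

lemma apScore_cons (w : Sym2 C) (A : Multiset (Sym2 C)) (c : C) :
    apScore (w ::ₘ A) c = apScore A c + if c ∈ w then 1 else 0 := by
  simp only [apScore, Multiset.filter_cons]
  split <;> simp [add_comm]

lemma apScore_mono {A B : Multiset (Sym2 C)} (h : A ≤ B) (c : C) :
    apScore A c ≤ apScore B c :=
  Multiset.card_le_card (Multiset.filter_le_filter _ h)

lemma apScore_le_card (A : Multiset (Sym2 C)) (c : C) : apScore A c ≤ Multiset.card A :=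
  Multiset.card_le_card (Multiset.filter_le _ _)

lemma apScore_eq_card_iff (A : Multiset (Sym2 C)) (c : C) :
    apScore A c = Multiset.card A ↔ ∀ v ∈ A, c ∈ v := by
  rw [apScore, ← Multiset.countP_eq_card_filter, Multiset.countP_eq_card]

lemma apScore_eq_zero_iff (A : Multiset (Sym2 C)) (c : C) :
    apScore A c = 0 ↔ ∀ v ∈ A, c ∉ v := by
  rw [apScore, ← Multiset.countP_eq_card_filter, Multiset.countP_eq_zero]

lemma apScore_cons_erase {v : Sym2 C} {A : Multiset (Sym2 C)} (hv : v ∈ A) (w : Sym2 C)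
    (c : C) :
    apScore (w ::ₘ A.erase v) c + (if c ∈ v then 1 else 0) =
      apScore A c + if c ∈ w then 1 else 0 := by
  conv_rhs => rw [← Multiset.cons_erase hv]
  simp only [apScore_cons]
  ac_rfl

lemma exists_exchange_apScore_succ {A X : Multiset (Sym2 C)} (p : C) (hAX : A ≤ X)
    (hA : apScore A p < Multiset.card A) (hX : apScore A p < apScore X p) :
    ∃ B ≤ X, Multiset.card B = Multiset.card A ∧ apScore B p = apScore A p + 1 ∧
      ∀ c, apScore B c ≤ apScore A c + 1 := by
  obtain ⟨v, hvA, hpv⟩ : ∃ v ∈ A, p ∉ v := by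
    by_contra! h
    exact hA.ne ((apScore_eq_card_iff A p).mpr h)
  obtain ⟨w, hwX, hpw⟩ : ∃ w ∈ X - A, p ∈ w := by
    by_contra! h
    have hsplit := apScore_add A (X - A) p
    rw [add_tsub_cancel_of_le hAX, (apScore_eq_zero_iff _ p).mpr h] at hsplit
    omega
  have hwA : w ::ₘ A ≤ X := by
    calc w ::ₘ A = A + {w} := by rw [add_comm, Multiset.singleton_add]
      _ ≤ A + (X - A) := add_le_add_right (Multiset.singleton_le.mpr hwX) A
      _ = X := add_tsub_cancel_of_le hAX
  refine ⟨w ::ₘ A.erase v, (Multiset.cons_le_cons w (Multiset.erase_le v A)).trans hwA, ?_, ?_,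
    fun c => ?_⟩
  · rw [Multiset.card_cons, Multiset.card_erase_add_one hvA]
  · simpa [hpv, hpw] using apScore_cons_erase hvA w p
  · have := apScore_cons_erase hvA w c
    split_ifs at this <;> omega

end Score

section Winner

variable {C : Type} [Fintype C] [DecidableEq C]

lemma apWinner_add_of_apScore_le {A B Z : Multiset (Sym2 C)} {p : C}
    (hgain : ∀ c, apScore B c + apScore A p ≤ apScore A c + apScore B p)
    (h : apWinner (A + Z) p) : apWinner (B + Z) p := by
  intro d
  have hd := h d
  have := hgain d
  simp only [apScore_add] at hd ⊢
  omega

lemma exists_le_apWinner_apScore_eq_min (p : C) (Z : Multiset (Sym2 C))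
    {A X : Multiset (Sym2 C)} (hAX : A ≤ X) (hA : apWinner (A + Z) p) :
    ∃ B ≤ X, Multiset.card B = Multiset.card A ∧ apWinner (B + Z) p ∧
      apScore B p = min (Multiset.card A) (apScore X p) := by
  obtain ⟨n, hn⟩ : ∃ n, min (Multiset.card A) (apScore X p) - apScore A p = n := ⟨_, rfl⟩
  induction n generalizing A with
  | zero =>
    refine ⟨A, hAX, rfl, hA, le_antisymm ?_ (by omega)⟩
    exact le_min (apScore_le_card A p) (apScore_mono hAX p)
  | succ n ih =>
    obtain ⟨B, hBX, hcard, hBp, hBc⟩ :=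
      exists_exchange_apScore_succ p hAX (by omega) (by omega)
    have hB : apWinner (B + Z) p :=
      apWinner_add_of_apScore_le (fun c => by have := hBc c; omega) hA
    simpa only [hcard] using ih hBX hB (by omega)

end Winner

theorem stmt14_general {C : Type} [Fintype C] [DecidableEq C] (p : C)
    (X Y : Multiset (Sym2 C)) (k ℓ : ℕ) :
    (∃ X' ≤ X, ∃ Y' ≤ Y, Multiset.card X' = k ∧ Multiset.card Y' = ℓ ∧
        apWinner (X' + Y') p) →
    (∃ X' ≤ X, ∃ Y' ≤ Y, Multiset.card X' = k ∧ Multiset.card Y' = ℓ ∧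
        apWinner (X' + Y') p ∧
        apScore X' p = min k (apScore X p) ∧ apScore Y' p = min ℓ (apScore Y p)) := by
  rintro ⟨X₀, hX₀, Y₀, hY₀, rfl, rfl, hwin₀⟩
  obtain ⟨X₁, hX₁, hcardX, hwin₁, hscoreX⟩ := exists_le_apWinner_apScore_eq_min p Y₀ hX₀ hwin₀
  rw [add_comm] at hwin₁
  obtain ⟨Y₁, hY₁, hcardY, hwin₂, hscoreY⟩ := exists_le_apWinner_apScore_eq_min p X₁ hY₀ hwin₁
  rw [add_comm] at hwin₂
  exact ⟨X₁, hX₁, Y₁, hY₁, hcardX, hcardY, hwin₂, hcardX ▸ hscoreX, hcardY ▸ hscoreY⟩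

/-- if `p` can be made a 2-Approval winner by adding exactly `k` votes from `X`
and exactly `ℓ` votes from `Y`, then this can be done while adding as many votes containing
`p` as possible from each of `X` and `Y`. -/
theorem stmt14 {C : Type} [Fintype C] [DecidableEq C] (p : C)
    (X Y : Multiset (Sym2 C))
    (hX : ∀ v ∈ X, ¬ v.IsDiag) (hY : ∀ v ∈ Y, ¬ v.IsDiag)
    (k ℓ : ℕ) (hk : k ≤ Multiset.card X) (hℓ : ℓ ≤ Multiset.card Y) :
    (∃ X' ≤ X, ∃ Y' ≤ Y, Multiset.card X' = k ∧ Multiset.card Y' = ℓ ∧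
        apWinner (X' + Y') p) →
    (∃ X' ≤ X, ∃ Y' ≤ Y, Multiset.card X' = k ∧ Multiset.card Y' = ℓ ∧
        apWinner (X' + Y') p ∧
        apScore X' p = min k (apScore X p) ∧ apScore Y' p = min ℓ (apScore Y p)) :=
  stmt14_general p X Y k ℓ
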